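/- arXiv:1907.11362 — 2 statements merged into one kernel-verified Lean document; each statement's English description precedes it below -/
import Mathlib

section
/- Let x₁, x₂, …, x_t be i.i.d. random vectors in ℝ^d with ‖x_τ‖_∞ ≤ 1 almost surely for all τ. Let Σ = E[x_τ x_τᵀ] and Σ̂_t = (1/t)·Σ_{τ=1}^t x_τ x_τᵀ. Let β ∈ ℝ^d with ‖β‖₀ = s₀, suppose Σ ∈ C(supp(β), φ) for some φ > 0, and set c = min(0.5, φ²/(256·s₀)). Then for every t ≥ (3/c²)·log d, one has P[ Σ̂_t ∈ C(supp(β), φ/√2) ] ≥ 1 − exp(−c²·t). -/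
open MeasureTheory ProbabilityTheory Real Finset Matrix

noncomputable section

/-- The L¹ norm of a vector in `ℝ^d`. -/
def l1Norm {d : ℕ} (v : Fin d → ℝ) : ℝ := ∑ i, |v i|

/-- The number of nonzero entries of a vector (the "L⁰ norm" `‖·‖₀`). -/
def l0Norm {d : ℕ} (v : Fin d → ℝ) : ℕ := (Finset.univ.filter (fun i => v i ≠ 0)).card

/-- The support of a vector, as a `Finset` of indices. -/
def spt {d : ℕ} (v : Fin d → ℝ) : Finset (Fin d) := Finset.univ.filter (fun i => v i ≠ 0)

/-- The compatibility set `C(I, φ)`: the set of `d × d` real matrices `M` such that for every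
`v ∈ ℝ^d` with `‖v_{Iᶜ}‖₁ ≤ 3 ‖v_I‖₁` one has `‖v_I‖₁² ≤ |I| (vᵀ M v) / φ²`. -/
def compatSet {d : ℕ} (I : Finset (Fin d)) (φ : ℝ) : Set (Matrix (Fin d) (Fin d) ℝ) :=
  {M | ∀ v : Fin d → ℝ,
    (∑ i ∈ Iᶜ, abs (v i)) ≤ 3 * (∑ i ∈ I, abs (v i)) →
    (∑ i ∈ I, abs (v i)) ^ 2 ≤ (I.card : ℝ) * (v ⬝ᵥ M.mulVec v) / φ ^ 2}

/-! If every entry of `Σ̂_t` is within `δ = φ² / (32 s₀)` of the corresponding entry of `Σ`, then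
on the cone `‖v_{Iᶜ}‖₁ ≤ 3 ‖v_I‖₁` the two quadratic forms differ by at most
`δ ‖v‖₁² ≤ 16 δ ‖v_I‖₁²`, which costs at most half of the compatibility constant `φ²`.
Each entry of `Σ̂_t` is an average of `t` independent `[-1, 1]`-valued variables, so by Hoeffding's
inequality it deviates by `δ` with probability at most `exp (-t δ² / 2)`; a union bound over the
entries, together with `δ ≥ 8 c` and `c² t ≥ 3 log d`, gives the claim. -/

/-- Diagonal entries enter `vᵀ M v` with the weight `v i ^ 2 ≥ 0`, so only a lower bound is
needed there; this keeps the union bound at `2 d² - d ≤ d³` events, which matters for `d = 1`. -/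
def IsEntrywiseLowerApprox {n : Type*} (δ : ℝ) (S M : Matrix n n ℝ) : Prop :=
  (∀ i j, S i j - M i j ≤ δ) ∧ ∀ i j, i ≠ j → M i j - S i j ≤ δ

theorem dotProduct_mulVec_sub_le_of_isEntrywiseLowerApprox {n : Type*} [Fintype n]
    {S M : Matrix n n ℝ} {δ : ℝ} (h : IsEntrywiseLowerApprox δ S M) (v : n → ℝ) :
    v ⬝ᵥ S *ᵥ v - δ * (∑ i, |v i|) ^ 2 ≤ v ⬝ᵥ M *ᵥ v := by
  obtain ⟨hlow, hupp⟩ := h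
  have hterm : ∀ i j, v i * v j * (S i j - M i j) ≤ |v i| * |v j| * δ := by
    intro i j
    rcases eq_or_ne i j with rfl | hij
    · rw [abs_mul_abs_self]
      exact mul_le_mul_of_nonneg_left (hlow i i) (mul_self_nonneg _)
    · calc v i * v j * (S i j - M i j) ≤ |v i * v j * (S i j - M i j)| := le_abs_self _
        _ = |v i| * |v j| * |S i j - M i j| := by rw [abs_mul, abs_mul]
        _ ≤ |v i| * |v j| * δ := by
          gcongr
          exact abs_le.2 ⟨by linarith [hupp i j hij], hlow i j⟩
  have hexpand : v ⬝ᵥ S *ᵥ v - v ⬝ᵥ M *ᵥ v = ∑ i, ∑ j, v i * v j * (S i j - M i j) := by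
    simp only [dotProduct, mulVec, Finset.mul_sum, ← Finset.sum_sub_distrib]
    exact Finset.sum_congr rfl fun i _ => Finset.sum_congr rfl fun j _ => by ring
  have hsq : ∑ i, ∑ j, |v i| * |v j| * δ = δ * (∑ i, |v i|) ^ 2 := by
    rw [sq, Finset.sum_mul_sum, Finset.mul_sum]
    exact Finset.sum_congr rfl fun i _ => by
      rw [Finset.mul_sum]
      exact Finset.sum_congr rfl fun j _ => by ring
  have := Finset.sum_le_sum fun i (_ : i ∈ Finset.univ) =>
    Finset.sum_le_sum fun j (_ : j ∈ Finset.univ) => hterm i j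
  linarith

theorem mem_compatSet_of_quadForm_ge {d : ℕ} {I : Finset (Fin d)} {φ δ : ℝ}
    {S M : Matrix (Fin d) (Fin d) ℝ} (hφ : 0 < φ) (hδ : 32 * δ * I.card ≤ φ ^ 2)
    (hS : S ∈ compatSet I φ)
    (hM : ∀ v, v ⬝ᵥ S *ᵥ v - δ * (∑ i, |v i|) ^ 2 ≤ v ⬝ᵥ M *ᵥ v) :
    M ∈ compatSet I (φ / √2) := by
  intro v hv
  set L := ∑ i ∈ I, |v i|
  have hL : 0 ≤ L := Finset.sum_nonneg fun i _ => abs_nonneg _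
  have htotal : ∑ i, |v i| ≤ 4 * L := by
    linarith [Finset.sum_add_sum_compl I fun i => |v i|]
  have hS' : φ ^ 2 * L ^ 2 ≤ I.card * (v ⬝ᵥ S *ᵥ v) := by
    have := hS v hv
    rwa [le_div_iff₀ (by positivity), mul_comm] at this
  have hI : (0 : ℝ) ≤ I.card := Nat.cast_nonneg _
  have hsq : (∑ i, |v i|) ^ 2 ≤ 16 * L ^ 2 := by
    nlinarith [Finset.sum_nonneg fun i (_ : i ∈ Finset.univ) => abs_nonneg (v i)]
  rw [div_pow, Real.sq_sqrt zero_le_two, le_div_iff₀ (by positivity)]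
  nlinarith [mul_le_mul_of_nonneg_left (hM v) hI]

theorem card_sq_add_card_offDiag_le_pow_three (N : ℕ) : N * N + (N * N - N) ≤ N ^ 3 := by
  rcases N with _ | N
  · simp
  · rw [Nat.mul_succ (N + 1) N, Nat.add_sub_cancel]
    nlinarith [Nat.zero_le (N ^ 3), Nat.zero_le (N ^ 2)]

theorem measure_not_isEntrywiseLowerApprox_le {Ω : Type*} [MeasurableSpace Ω] {μ : Measure Ω}
    {n : Type*} [Fintype n] {S : Matrix n n ℝ} {M : Ω → Matrix n n ℝ} {δ r : ℝ} (hr : 0 ≤ r)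
    (hlow : ∀ i j, μ {ω | δ ≤ S i j - M ω i j} ≤ ENNReal.ofReal r)
    (hupp : ∀ i j, i ≠ j → μ {ω | δ ≤ M ω i j - S i j} ≤ ENNReal.ofReal r) :
    μ {ω | ¬ IsEntrywiseLowerApprox δ S (M ω)} ≤ ENNReal.ofReal (Fintype.card n ^ 3 * r) := by
  classical
  set N := Fintype.card n
  have hsub : {ω | ¬ IsEntrywiseLowerApprox δ S (M ω)} ⊆
      (⋃ p ∈ (Finset.univ : Finset (n × n)), {ω | δ ≤ S p.1 p.2 - M ω p.1 p.2}) ∪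
      ⋃ p ∈ Finset.univ.offDiag, {ω | δ ≤ M ω p.1 p.2 - S p.1 p.2} := by
    intro ω hω
    simp only [Set.mem_ofPred_eq, IsEntrywiseLowerApprox, not_and_or, not_forall, not_le] at hω
    rcases hω with ⟨i, j, h⟩ | ⟨i, j, hij, h⟩
    · exact Or.inl (Set.mem_biUnion (x := (i, j)) (Finset.mem_coe.2 (Finset.mem_univ _)) h.le)
    · exact Or.inr (Set.mem_biUnion (x := (i, j))
        (Finset.mem_coe.2 (Finset.mem_offDiag.2 ⟨Finset.mem_univ i, Finset.mem_univ j, hij⟩)) h.le)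
  calc _ ≤ ∑ p ∈ Finset.univ, ENNReal.ofReal r + ∑ p ∈ Finset.univ.offDiag, ENNReal.ofReal r :=
        (measure_mono hsub).trans <| (measure_union_le _ _).trans <| add_le_add
          ((measure_biUnion_finset_le _ _).trans (Finset.sum_le_sum fun p _ => hlow p.1 p.2))
          ((measure_biUnion_finset_le _ _).trans (Finset.sum_le_sum fun p hp =>
            hupp p.1 p.2 (Finset.mem_offDiag.1 hp).2.2))
    _ = ENNReal.ofReal ((N * N + (N * N - N) : ℕ) * r) := by
        rw [Finset.sum_const, Finset.sum_const, ← add_smul, ← nsmul_eq_mul, ENNReal.ofReal_nsmul,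
          Finset.offDiag_card, Finset.card_univ, Finset.card_univ, Fintype.card_prod]
    _ ≤ ENNReal.ofReal (N ^ 3 * r) := by
        gcongr
        exact_mod_cast card_sq_add_card_offDiag_le_pow_three _

def empiricalGram {n : Type*} {t : ℕ} (x : Fin t → n → ℝ) : Matrix n n ℝ :=
  fun i j => (1 / t : ℝ) * ∑ τ, x τ i * x τ j

section Concentration

variable {Ω : Type*} [MeasurableSpace Ω] {μ : Measure Ω} [IsProbabilityMeasure μ]

theorem ofReal_one_sub_le_measure {A : Set Ω} {ε : ℝ} (hε : 0 ≤ ε)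
    (h : μ Aᶜ ≤ ENNReal.ofReal ε) :
    ENNReal.ofReal (1 - ε) ≤ μ A := by
  have hsplit : 1 ≤ μ A + μ Aᶜ := by
    simpa only [Set.union_compl_self, measure_univ] using measure_union_le (μ := μ) A Aᶜ
  rw [ENNReal.ofReal_sub _ hε, ENNReal.ofReal_one, tsub_le_iff_right]
  exact hsplit.trans (by gcongr)

theorem measureReal_le_sum_sub_integral_le {ι : Type*} [Fintype ι] {Y : ι → Ω → ℝ}
    (hindep : iIndepFun Y μ) (hmeas : ∀ i, AEMeasurable (Y i) μ)
    (hbdd : ∀ i, ∀ᵐ ω ∂μ, |Y i ω| ≤ 1) {ε : ℝ} (hε : 0 ≤ ε) :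
    μ.real {ω | ε ≤ ∑ i, (Y i ω - μ[Y i])} ≤ exp (-ε ^ 2 / (2 * Fintype.card ι)) := by
  have hsubG : ∀ i ∈ Finset.univ, HasSubgaussianMGF (fun ω => Y i ω - μ[Y i]) 1 μ := by
    intro i _
    have hIcc : ∀ᵐ ω ∂μ, Y i ω ∈ Set.Icc (-1) 1 := by
      filter_upwards [hbdd i] with ω h using abs_le.1 h
    convert hasSubgaussianMGF_of_mem_Icc (hmeas i) hIcc
    norm_num
  have hcentered : iIndepFun (fun i ω => Y i ω - μ[Y i]) μ :=
    hindep.comp (fun i (y : ℝ) => y - ∫ ω, Y i ω ∂μ) fun _ => measurable_id.sub_const _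
  simpa using HasSubgaussianMGF.measure_sum_ge_le_of_iIndepFun hcentered hsubG hε

theorem measure_le_mean_sub_le {E : Type*} [MeasurableSpace E] {t : ℕ} (ht : 0 < t)
    {x : Fin t → Ω → E} (hxmeas : ∀ τ, AEMeasurable (x τ) μ) (hxindep : iIndepFun x μ)
    {f : E → ℝ} (hf : Measurable f) (hfbdd : ∀ τ, ∀ᵐ ω ∂μ, |f (x τ ω)| ≤ 1)
    {m : ℝ} (hmean : ∀ τ, ∫ ω, f (x τ ω) ∂μ = m) {δ : ℝ} (hδ : 0 ≤ δ) :
    μ {ω | δ ≤ (1 / t : ℝ) * ∑ τ, f (x τ ω) - m} ≤ ENNReal.ofReal (exp (-(t * δ ^ 2 / 2))) := by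
  have ht' : (0 : ℝ) < t := Nat.cast_pos.2 ht
  have hset : {ω | δ ≤ (1 / t : ℝ) * ∑ τ, f (x τ ω) - m}
      = {ω | t * δ ≤ ∑ τ, ((f ∘ x τ) ω - μ[f ∘ x τ])} := by
    ext ω
    simp only [Set.mem_ofPred_eq, Function.comp_apply, hmean, Finset.sum_sub_distrib,
      Finset.sum_const, Finset.card_univ, Fintype.card_fin, nsmul_eq_mul]
    rw [← mul_le_mul_iff_of_pos_left ht', mul_sub, ← mul_assoc, mul_one_div_cancel ht'.ne',
      one_mul]
  have hbound := measureReal_le_sum_sub_integral_le (hxindep.comp (fun _ => f) fun _ => hf)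
    (fun τ => hf.comp_aemeasurable (hxmeas τ)) hfbdd (mul_nonneg ht'.le hδ)
  rw [hset, ENNReal.le_ofReal_iff_toReal_le (measure_ne_top _ _) (exp_nonneg _),
    ← measureReal_def]
  refine hbound.trans_eq (congrArg exp ?_)
  rw [Fintype.card_fin]
  field_simp

theorem measure_not_isEntrywiseLowerApprox_empiricalGram_le {n : Type*} [Fintype n] {t : ℕ}
    (ht : 0 < t) {x : Fin t → Ω → n → ℝ} (hxmeas : ∀ τ, AEMeasurable (x τ) μ)
    (hxindep : iIndepFun x μ) (hxbdd : ∀ τ, ∀ᵐ ω ∂μ, ∀ i, |x τ ω i| ≤ 1)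
    {S : Matrix n n ℝ} (hS : ∀ τ i j, S i j = ∫ ω, x τ ω i * x τ ω j ∂μ) {δ : ℝ} (hδ : 0 ≤ δ) :
    μ {ω | ¬ IsEntrywiseLowerApprox δ S (empiricalGram fun τ => x τ ω)}
      ≤ ENNReal.ofReal (Fintype.card n ^ 3 * exp (-(t * δ ^ 2 / 2))) := by
  have hprod_meas : ∀ i j, Measurable fun v : n → ℝ => v i * v j := fun i j =>
    (measurable_pi_apply i).mul (measurable_pi_apply j)
  have hprod_bdd : ∀ i j τ, ∀ᵐ ω ∂μ, |x τ ω i * x τ ω j| ≤ 1 := fun i j τ => by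
    filter_upwards [hxbdd τ] with ω h
    rw [abs_mul]
    exact mul_le_one₀ (h i) (abs_nonneg _) (h j)
  refine measure_not_isEntrywiseLowerApprox_le (exp_nonneg _) (fun i j => ?_)
    fun i j _ => measure_le_mean_sub_le ht hxmeas hxindep (hprod_meas i j) (hprod_bdd i j)
      (fun τ => (hS τ i j).symm) hδ
  convert measure_le_mean_sub_le ht hxmeas hxindep (f := fun v => -(v i * v j)) (m := -S i j)
    (hprod_meas i j).neg (fun τ => by simpa only [abs_neg] using hprod_bdd i j τ)
    (fun τ => by rw [integral_neg, hS τ]) hδ using 2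
  ext ω
  simp only [Set.mem_ofPred_eq, empiricalGram, Finset.sum_neg_distrib]
  rw [mul_neg, sub_neg_eq_add, neg_add_eq_sub]

end Concentration

theorem natCast_pow_three_mul_exp_le {d : ℕ} (hd : 0 < d) {c δ t : ℝ} (ht : 0 ≤ t)
    (hc : 0 ≤ c) (hδc : 8 * c ≤ δ) (hlog : 3 * log d ≤ c ^ 2 * t) :
    (d : ℝ) ^ 3 * exp (-(t * δ ^ 2 / 2)) ≤ exp (-(c ^ 2) * t) := by
  have hd3 : (d : ℝ) ^ 3 ≤ exp (c ^ 2 * t) := by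
    calc (d : ℝ) ^ 3 = exp ((3 : ℕ) * log d) := by
          rw [Real.exp_nat_mul, Real.exp_log (Nat.cast_pos.2 hd)]
      _ ≤ exp (c ^ 2 * t) := exp_le_exp.2 (by exact_mod_cast hlog)
  have hδsq : 4 * c ^ 2 ≤ δ ^ 2 / 2 := by nlinarith
  calc _ ≤ exp (c ^ 2 * t) * exp (-(2 * (c ^ 2 * t))) := by
        gcongr
        nlinarith [mul_le_mul_of_nonneg_left hδsq ht]
    _ = exp (-(c ^ 2) * t) := by rw [← exp_add]; ring_nf

theorem stmt2_general
    {Ω : Type*} [MeasureSpace Ω] [IsProbabilityMeasure (ℙ : Measure Ω)]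
    (d t : ℕ) (hd : 0 < d) (ht : 0 < t)
    (x : Fin t → Ω → Fin d → ℝ) (hxmeas : ∀ τ, Measurable (x τ))
    (hxindep : iIndepFun x ℙ)
    (hxbdd : ∀ τ : Fin t, ∀ᵐ ω ∂(ℙ : Measure Ω), ∀ i, |x τ ω i| ≤ 1)
    (β : Fin d → ℝ) (s₀ : ℕ) (hs₀ : l0Norm β = s₀)
    (Sig : Matrix (Fin d) (Fin d) ℝ)
    (hSig : ∀ τ : Fin t, ∀ i j, Sig i j = ∫ ω, x τ ω i * x τ ω j ∂(ℙ : Measure Ω))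
    (φ : ℝ) (hφ : 0 < φ)
    (hcompat : Sig ∈ compatSet (spt β) φ)
    (c : ℝ) (hc : c = min 0.5 (φ ^ 2 / (256 * s₀)))
    (htlb : (3 / c ^ 2) * Real.log d ≤ (t : ℝ)) :
    ENNReal.ofReal (1 - Real.exp (-(c ^ 2) * t)) ≤
      ℙ {ω | (fun i j => (1 / t : ℝ) * ∑ τ, x τ ω i * x τ ω j)
          ∈ compatSet (spt β) (φ / Real.sqrt 2)} := by
  obtain rfl | hs₀pos := Nat.eq_zero_or_pos s₀
  · have hc0 : c = 0 := by rw [hc]; norm_num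
    simp [hc0]
  have hc0 : 0 < c := hc ▸ lt_min (by norm_num) (by positivity)
  set δ := φ ^ 2 / (32 * s₀) with hδ
  have hδc : 8 * c ≤ δ := by
    have : c ≤ φ ^ 2 / (256 * s₀) := hc ▸ min_le_right _ _
    calc 8 * c ≤ 8 * (φ ^ 2 / (256 * s₀)) := by gcongr
      _ = δ := by rw [hδ]; field_simp; norm_num
  have hgood : {ω | IsEntrywiseLowerApprox δ Sig (empiricalGram fun τ => x τ ω)} ⊆
      {ω | (fun i j => (1 / t : ℝ) * ∑ τ, x τ ω i * x τ ω j)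
          ∈ compatSet (spt β) (φ / Real.sqrt 2)} := fun ω hω =>
    mem_compatSet_of_quadForm_ge hφ
      (le_of_eq (by rw [show (spt β).card = s₀ from hs₀, hδ]; field_simp)) hcompat
      (dotProduct_mulVec_sub_le_of_isEntrywiseLowerApprox hω)
  have hbad := measure_not_isEntrywiseLowerApprox_empiricalGram_le ht
    (fun τ => (hxmeas τ).aemeasurable) hxindep hxbdd hSig (by positivity : 0 ≤ δ)
  have hlog : 3 * log d ≤ c ^ 2 * t := by
    rw [div_mul_eq_mul_div, div_le_iff₀ (by positivity)] at htlb
    linarith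
  rw [Fintype.card_fin] at hbad
  have hnum := natCast_pow_three_mul_exp_le hd (Nat.cast_nonneg t) hc0.le hδc hlog
  exact (ofReal_one_sub_le_measure (exp_nonneg _)
    (hbad.trans (ENNReal.ofReal_le_ofReal hnum))).trans (measure_mono hgood)

/-- **Lemma 3.3 (Bastani–Bayati, Lemma EC.6): the empirical Gram matrix of i.i.d. bounded
vectors inherits compatibility.** If `x₁, …, x_t` are i.i.d. random vectors in `ℝ^d` with
`‖x_τ‖_∞ ≤ 1` a.s., `Σ = E[x_τ x_τᵀ] ∈ C(supp β, φ)` with `‖β‖₀ = s₀`, and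
`c = min(0.5, φ²/(256 s₀))`, then for `t ≥ (3/c²) log d`,
`P[Σ̂_t ∈ C(supp β, φ/√2)] ≥ 1 - exp(-c² t)` where `Σ̂_t = (1/t) Σ_τ x_τ x_τᵀ`. -/
theorem stmt2
    {Ω : Type*} [MeasureSpace Ω] [IsProbabilityMeasure (ℙ : Measure Ω)]
    (d t : ℕ) (hd : 0 < d) (ht : 0 < t)
    (x : Fin t → Ω → Fin d → ℝ) (hxmeas : ∀ τ, Measurable (x τ))
    (hxindep : iIndepFun x ℙ)
    (hxident : ∀ τ τ' : Fin t, Measure.map (x τ) ℙ = Measure.map (x τ') ℙ)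
    (hxbdd : ∀ τ : Fin t, ∀ᵐ ω ∂(ℙ : Measure Ω), ∀ i, |x τ ω i| ≤ 1)
    (β : Fin d → ℝ) (s₀ : ℕ) (hs₀ : l0Norm β = s₀)
    (Sig : Matrix (Fin d) (Fin d) ℝ)
    (hSig : ∀ τ : Fin t, ∀ i j, Sig i j = ∫ ω, x τ ω i * x τ ω j ∂(ℙ : Measure Ω))
    (φ : ℝ) (hφ : 0 < φ)
    (hcompat : Sig ∈ compatSet (spt β) φ)
    (c : ℝ) (hc : c = min 0.5 (φ ^ 2 / (256 * s₀)))
    (htlb : (3 / c ^ 2) * Real.log d ≤ (t : ℝ)) :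
    ENNReal.ofReal (1 - Real.exp (-(c ^ 2) * t)) ≤
      ℙ {ω | (fun i j => (1 / t : ℝ) * ∑ τ, x τ ω i * x τ ω j)
          ∈ compatSet (spt β) (φ / Real.sqrt 2)} :=
  stmt2_general d t hd ht x hxmeas hxindep hxbdd β s₀ hs₀ Sig hSig φ hφ hcompat c hc htlb
end
end

section
/- Let N and d be positive integers, β, β̂ ∈ ℝ^d, and b₁,…,b_N ∈ ℝ^d be fixed contexts with ‖b_i‖_∞ ≤ 1 for all i. Let η₁,…,η_N be real random variables with E[η_i] = 0 and E[η_i²] ≤ R² for each i, set r_i = b_iᵀβ + η_i, and let a be a random index in {1,…,N}, independent of (η₁,…,η_N), with P(a = i) = π_i ≥ p > 0 for every i. Define r̂ = b̄ᵀβ̂ + (1/N)·(r_a − b_aᵀβ̂)/π_a with b̄ = (1/N)·Σ_{i=1}^N b_i, and suppose ‖β̂ − β‖₁ ≤ B. Then E[(r̂ − b̄ᵀβ)²] ≤ 3·( B² + (R² + B²)/(N·p)² ). -/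
/-!
Write `r̂ - b̄ᵀβ = b̄ᵀ(β̂ - β) + (η_a - b_aᵀ(β̂ - β)) / (N π_a)`. Since the contexts lie in the unit
sup-ball, the two bias terms are bounded by `B` and `B / (N p)`, and the noise term by
`|η_a| / (N p)`; `(x + y + z)² ≤ 3 (x² + y² + z²)` then leaves only `E[η_a²]`, which by the
independence of `a` and `η` is a convex combination of the `E[η_i²] ≤ R²`.
-/

open MeasureTheory ProbabilityTheory Real Finset Matrix

noncomputable section

lemma apply_eq_sum_indicator_mul {ι β : Type*} [Fintype ι] (g : ι → β → ℝ) (a : β → ι) (x : β) :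
    g (a x) x = ∑ i, ({i} : Set ι).indicator 1 (a x) * g i x := by
  rw [Fintype.sum_eq_single (a x) fun i hi => by simp [Ne.symm hi]]
  simp

section RandomIndex

variable {Ω ι : Type*} [MeasurableSpace Ω] {μ : Measure Ω} [MeasurableSpace ι]
  [MeasurableSingletonClass ι] {a : Ω → ι}

lemma integrable_indicator_singleton_comp_mul (ha : Measurable a) (i : ι) {g : Ω → ℝ}
    (hg : Integrable g μ) : Integrable (fun ω => ({i} : Set ι).indicator 1 (a ω) * g ω) μ :=
  hg.bdd_mul (c := 1)
    ((measurable_one.indicator (measurableSet_singleton i)).comp ha).aestronglyMeasurable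
    (.of_forall fun ω => by by_cases h : a ω = i <;> simp [h])

lemma integrable_apply_of_measurable [Fintype ι] (ha : Measurable a) {g : ι → Ω → ℝ}
    (hg : ∀ i, Integrable (g i) μ) : Integrable (fun ω => g (a ω) ω) μ := by
  simp_rw [apply_eq_sum_indicator_mul g a]
  exact integrable_finsetSum _ fun i _ => integrable_indicator_singleton_comp_mul ha i (hg i)

lemma integral_apply_eq_sum_of_indepFun [Fintype ι] {E : Type*} [MeasurableSpace E] {X : Ω → E}
    (ha : Measurable a) (hindep : IndepFun a X μ) {F : ι → E → ℝ} (hF : ∀ i, Measurable (F i))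
    (hint : ∀ i, Integrable (fun ω => F i (X ω)) μ) :
    ∫ ω, F (a ω) (X ω) ∂μ = ∑ i, μ.real (a ⁻¹' {i}) * ∫ ω, F i (X ω) ∂μ := by
  simp_rw [apply_eq_sum_indicator_mul (fun i ω => F i (X ω)) a]
  rw [integral_finsetSum _ fun i _ => integrable_indicator_singleton_comp_mul ha i (hint i)]
  refine sum_congr rfl fun i _ => ?_
  have hone : Measurable (({i} : Set ι).indicator (1 : ι → ℝ)) :=
    measurable_one.indicator (measurableSet_singleton i)
  have hprob : ∫ ω, ({i} : Set ι).indicator 1 (a ω) ∂μ = μ.real (a ⁻¹' {i}) := by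
    simp_rw [← Set.indicator_comp_right]
    exact integral_indicator_one (ha (measurableSet_singleton i))
  rw [← hprob]
  exact (hindep.comp hone (hF i)).integral_mul_eq_mul_integral
    (hone.comp ha).aestronglyMeasurable (hint i).aestronglyMeasurable

lemma sum_measureReal_preimage_singleton_eq_one [Fintype ι] [IsProbabilityMeasure μ]
    (ha : Measurable a) : ∑ i, μ.real (a ⁻¹' {i}) = 1 := by
  rw [sum_measureReal_preimage_singleton _ fun i _ => ha (measurableSet_singleton i)]
  simp

lemma integral_sq_apply_le_of_indepFun [Fintype ι] [IsProbabilityMeasure μ] (ha : Measurable a)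
    {η : ι → Ω → ℝ} (hindep : IndepFun a (fun ω i => η i ω) μ)
    (hsq : ∀ i, Integrable (fun ω => η i ω ^ 2) μ) {σ : ℝ} (hσ : ∀ i, ∫ ω, η i ω ^ 2 ∂μ ≤ σ) :
    ∫ ω, η (a ω) ω ^ 2 ∂μ ≤ σ := calc
  ∫ ω, η (a ω) ω ^ 2 ∂μ = ∑ i, μ.real (a ⁻¹' {i}) * ∫ ω, η i ω ^ 2 ∂μ :=
    integral_apply_eq_sum_of_indepFun ha hindep (F := fun i v => v i ^ 2)
      (fun i => (measurable_pi_apply i).pow_const 2) hsq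
  _ ≤ ∑ i, μ.real (a ⁻¹' {i}) * σ := by gcongr with i; exact hσ i
  _ = σ := by rw [← sum_mul, sum_measureReal_preimage_singleton_eq_one ha, one_mul]

end RandomIndex

lemma integral_le_const_add_mul_of_le {Ω : Type*} [MeasurableSpace Ω] {μ : Measure Ω}
    [IsProbabilityMeasure μ] {f g : Ω → ℝ} {A K s : ℝ} (hf : 0 ≤ f) (hg : Integrable g μ)
    (hK : 0 ≤ K) (hgs : ∫ ω, g ω ∂μ ≤ s) (hfg : ∀ ω, f ω ≤ A + K * g ω) :
    ∫ ω, f ω ∂μ ≤ A + K * s := calc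
  ∫ ω, f ω ∂μ ≤ ∫ ω, A + K * g ω ∂μ :=
    integral_mono_of_nonneg (.of_forall hf) ((integrable_const A).add (hg.const_mul K))
      (.of_forall hfg)
  _ = A + K * ∫ ω, g ω ∂μ := by
    rw [integral_add (integrable_const A) (hg.const_mul K), integral_const_mul]
    simp
  _ ≤ A + K * s := by gcongr

lemma abs_dotProduct_le_l1Norm {d : ℕ} {w : Fin d → ℝ} (hw : ∀ j, |w j| ≤ 1) (v : Fin d → ℝ) :
    |w ⬝ᵥ v| ≤ l1Norm v := calc
  |w ⬝ᵥ v| ≤ ∑ j, |w j * v j| := abs_sum_le_sum_abs _ _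
  _ ≤ ∑ j, |v j| := sum_le_sum fun j _ => by
    rw [abs_mul]
    exact mul_le_of_le_one_left (abs_nonneg _) (hw j)

lemma abs_one_div_mul_sum_le_one {N : ℕ} {f : Fin N → ℝ} (hf : ∀ i, |f i| ≤ 1) :
    |(1 / N : ℝ) * ∑ i, f i| ≤ 1 := by
  rw [abs_mul, abs_of_nonneg (by positivity)]
  calc (1 / N : ℝ) * |∑ i, f i| ≤ (1 / N : ℝ) * ∑ _i : Fin N, 1 := by
        gcongr
        exact (abs_sum_le_sum_abs _ _).trans (sum_le_sum fun i _ => hf i)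
    _ ≤ 1 := by simpa using inv_mul_le_one

lemma sq_add_add_le (x y z : ℝ) : (x + y + z) ^ 2 ≤ 3 * (x ^ 2 + y ^ 2 + z ^ 2) := by
  nlinarith [sq_nonneg (x - y), sq_nonneg (x - z), sq_nonneg (y - z)]

lemma sq_add_sub_div_le {N q p B x e v : ℝ} (hN : 0 < N) (hp : 0 < p) (hq : p ≤ q)
    (hx : |x| ≤ B) (he : |e| ≤ B) :
    (x + (v - e) / (N * q)) ^ 2 ≤ 3 * (B ^ 2 + (B ^ 2 + v ^ 2) / (N * p) ^ 2) := calc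
  (x + (v - e) / (N * q)) ^ 2 = (x + -e / (N * q) + v / (N * q)) ^ 2 := by ring
  _ ≤ 3 * (x ^ 2 + (-e / (N * q)) ^ 2 + (v / (N * q)) ^ 2) := sq_add_add_le _ _ _
  _ = 3 * (x ^ 2 + (e ^ 2 + v ^ 2) / (N * q) ^ 2) := by ring
  _ ≤ 3 * (B ^ 2 + (B ^ 2 + v ^ 2) / (N * p) ^ 2) := by
    have hB : |B| = B := abs_of_nonneg ((abs_nonneg x).trans hx)
    have hx2 : x ^ 2 ≤ B ^ 2 := sq_le_sq.2 (hx.trans hB.ge)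
    have he2 : e ^ 2 ≤ B ^ 2 := sq_le_sq.2 (he.trans hB.ge)
    gcongr

theorem stmt6_general
    {Ω : Type*} [MeasureSpace Ω] [IsProbabilityMeasure (ℙ : Measure Ω)]
    (N d : ℕ) (hN : 0 < N)
    (β βhat : Fin d → ℝ) (b : Fin N → Fin d → ℝ)
    (hbbdd : ∀ i j, |b i j| ≤ 1)
    (η : Fin N → Ω → ℝ)
    (hηsqint : ∀ i, Integrable (fun ω => (η i ω) ^ 2) ℙ)
    (R : ℝ) (hηvar : ∀ i, ∫ ω, (η i ω) ^ 2 ∂(ℙ : Measure Ω) ≤ R ^ 2)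
    (r : Fin N → Ω → ℝ) (hr : ∀ i ω, r i ω = b i ⬝ᵥ β + η i ω)
    (a : Ω → Fin N) (hameas : Measurable a)
    (hindep : IndepFun a (fun ω => fun i => η i ω) ℙ)
    (pr : Fin N → ℝ) (p : ℝ) (hp : 0 < p) (hprlb : ∀ i, p ≤ pr i)
    (bbar : Fin d → ℝ) (hbbar : ∀ j, bbar j = (1 / N : ℝ) * ∑ i, b i j)
    (rhat : Ω → ℝ)
    (hrhat : ∀ ω, rhat ω =
      bbar ⬝ᵥ βhat + (1 / N : ℝ) * (r (a ω) ω - b (a ω) ⬝ᵥ βhat) / pr (a ω))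
    (B : ℝ) (hB : l1Norm (fun j => βhat j - β j) ≤ B) :
    ∫ ω, (rhat ω - bbar ⬝ᵥ β) ^ 2 ∂(ℙ : Measure Ω) ≤
      3 * (B ^ 2 + (R ^ 2 + B ^ 2) / (N * p) ^ 2) := by
  have hbbar_bdd : ∀ j, |bbar j| ≤ 1 := fun j =>
    hbbar j ▸ abs_one_div_mul_sum_le_one (hbbdd · j)
  have hbbar_err : |bbar ⬝ᵥ (βhat - β)| ≤ B := (abs_dotProduct_le_l1Norm hbbar_bdd _).trans hB
  have hb_err : ∀ i, |b i ⬝ᵥ (βhat - β)| ≤ B := fun i =>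
    (abs_dotProduct_le_l1Norm (hbbdd i) _).trans hB
  have hbound : ∀ ω, (rhat ω - bbar ⬝ᵥ β) ^ 2 ≤
      3 * (B ^ 2 + (B ^ 2 + η (a ω) ω ^ 2) / (N * p) ^ 2) := by
    intro ω
    have hq : pr (a ω) ≠ 0 := (hp.trans_le (hprlb _)).ne'
    have hsplit : rhat ω - bbar ⬝ᵥ β = bbar ⬝ᵥ (βhat - β) +
        (η (a ω) ω - b (a ω) ⬝ᵥ (βhat - β)) / (N * pr (a ω)) := by
      rw [hrhat, hr, dotProduct_sub, dotProduct_sub]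
      field_simp
      ring
    rw [hsplit]
    exact sq_add_sub_div_le (by exact_mod_cast hN) hp (hprlb _) hbbar_err (hb_err _)
  calc ∫ ω, (rhat ω - bbar ⬝ᵥ β) ^ 2 ∂ℙ
      ≤ 3 * (B ^ 2 + B ^ 2 / (N * p) ^ 2) + 3 / (N * p) ^ 2 * R ^ 2 :=
        integral_le_const_add_mul_of_le (fun _ => sq_nonneg _)
          (integrable_apply_of_measurable hameas hηsqint) (by positivity)
          (integral_sq_apply_le_of_indepFun hameas hindep hηsqint hηvar)
          fun ω => (hbound ω).trans_eq (by ring)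
    _ = 3 * (B ^ 2 + (R ^ 2 + B ^ 2) / (N * p) ^ 2) := by ring

/-- **Bounded second moment of the doubly-robust pseudo-reward.** With `‖b_i‖_∞ ≤ 1`,
centered errors `η_i` with `E[η_i²] ≤ R²`, rewards `r_i = b_iᵀβ + η_i`, an arm `a` drawn
independently of the errors with `P(a = i) = π_i ≥ p > 0`, pseudo-reward
`r̂ = b̄ᵀβ̂ + (1/N) (r_a - b_aᵀβ̂) / π_a`, and `‖β̂ - β‖₁ ≤ B`, one has
`E[(r̂ - b̄ᵀβ)²] ≤ 3 (B² + (R² + B²) / (N p)²)`. -/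
theorem stmt6
    {Ω : Type*} [MeasureSpace Ω] [IsProbabilityMeasure (ℙ : Measure Ω)]
    (N d : ℕ) (hN : 0 < N) (hd : 0 < d)
    (β βhat : Fin d → ℝ) (b : Fin N → Fin d → ℝ)
    (hbbdd : ∀ i j, |b i j| ≤ 1)
    (η : Fin N → Ω → ℝ) (hηmeas : ∀ i, Measurable (η i))
    (hηint : ∀ i, Integrable (η i) ℙ)
    (hηsqint : ∀ i, Integrable (fun ω => (η i ω) ^ 2) ℙ)
    (hηmean : ∀ i, ∫ ω, η i ω ∂(ℙ : Measure Ω) = 0)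
    (R : ℝ) (hηvar : ∀ i, ∫ ω, (η i ω) ^ 2 ∂(ℙ : Measure Ω) ≤ R ^ 2)
    (r : Fin N → Ω → ℝ) (hr : ∀ i ω, r i ω = b i ⬝ᵥ β + η i ω)
    (a : Ω → Fin N) (hameas : Measurable a)
    (hindep : IndepFun a (fun ω => fun i => η i ω) ℙ)
    (pr : Fin N → ℝ) (p : ℝ) (hp : 0 < p) (hprlb : ∀ i, p ≤ pr i)
    (hpr : ∀ i, (ℙ {ω | a ω = i}).toReal = pr i)
    (bbar : Fin d → ℝ) (hbbar : ∀ j, bbar j = (1 / N : ℝ) * ∑ i, b i j)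
    (rhat : Ω → ℝ)
    (hrhat : ∀ ω, rhat ω =
      bbar ⬝ᵥ βhat + (1 / N : ℝ) * (r (a ω) ω - b (a ω) ⬝ᵥ βhat) / pr (a ω))
    (B : ℝ) (hB : l1Norm (fun j => βhat j - β j) ≤ B) :
    ∫ ω, (rhat ω - bbar ⬝ᵥ β) ^ 2 ∂(ℙ : Measure Ω) ≤
      3 * (B ^ 2 + (R ^ 2 + B ^ 2) / (N * p) ^ 2) :=
  stmt6_general N d hN β βhat b hbbdd η hηsqint R hηvar r hr a hameas hindep pr p hp hprlb bbar
    hbbar rhat hrhat B hB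
end
end
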